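/- arXiv:math/0303258 — 5 statements merged into one kernel-verified Lean document; each statement's English description precedes it below -/
import Mathlib

section
/- Every regular homeomorphism of a compact metric space is recurrent, where regular means the family of all iterates {f^k : k ∈ ℤ} is equicontinuous. -/
open Filter Topology Metric

/-- `f` is recurrent with respect to the metric `m`: some sequence of iterates
`f^[n k]` with `n k → ∞` converges uniformly to the identity. -/
def RecurrentWith {X : Type*} (m : MetricSpace X) (f : X → X) : Prop :=
  ∃ n : ℕ → ℕ, Filter.Tendsto n Filter.atTop Filter.atTop ∧
    ∀ ε > 0, ∀ᶠ k in Filter.atTop, ∀ x, @dist X m.toDist (f^[n k] x) x < ε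

/-- `f` is a recurrent map of the metric space `X`. -/
def IsRecurrent {X : Type*} [m : MetricSpace X] (f : X → X) : Prop :=
  RecurrentWith m f

/-- The -th iterate () of a homeomorphism. -/
def iterZ {X : Type*} [TopologicalSpace X] (f : X ≃ₜ X) (k : ℤ) : X → X :=
  if 0 ≤ k then (f : X → X)^[k.toNat] else (f.symm : X → X)^[(-k).toNat]

lemma iterZ_natCast {X : Type*} [TopologicalSpace X] (f : X ≃ₜ X) (n : ℕ) :
    iterZ f (n : ℤ) = (f : X → X)^[n] := by
  simp [iterZ]

lemma iterZ_neg_natCast {X : Type*} [TopologicalSpace X] (f : X ≃ₜ X) (n : ℕ)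
    (x : X) : iterZ f (-(n : ℤ)) ((f : X → X)^[n] x) = x := by
  unfold iterZ
  split_ifs with h
  · have hn : n = 0 := by omega
    subst hn; simp
  · simp only [neg_neg, Int.toNat_natCast]
    exact (Function.LeftInverse.iterate f.symm_apply_apply n) x

lemma key {X : Type*} [MetricSpace X] [CompactSpace X] (f : X ≃ₜ X)
    (hreg : ∀ ε > (0 : ℝ), ∃ η > (0 : ℝ), ∀ x y : X, dist x y < η →
      ∀ k : ℤ, dist (iterZ f k x) (iterZ f k y) < ε)
    (ε : ℝ) (hε : 0 < ε) (N : ℕ) :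
    ∃ n ≥ N + 1, ∀ x : X, dist ((f : X → X)^[n] x) x < ε := by
  obtain ⟨η, hη, hη'⟩ := hreg ε hε
  obtain ⟨η₂, hη₂, hη₂'⟩ := hreg (η/3) (by linarith)
  -- finite η₂-net
  obtain ⟨t, -, htfin, htcov⟩ :=
    finite_cover_balls_of_compact (isCompact_univ (X := X)) hη₂
  haveI : Fintype ↥t := htfin.fintype
  set M := N + 1 with hM
  -- sequence in compact product space
  set u : ℕ → (↥t → X) := fun j s => (f : X → X)^[(j+1)*M] s.1 with hu
  obtain ⟨L, -, φ, hφ, hLim⟩ :=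
    (isCompact_univ (X := ↥t → X)).tendsto_subseq (fun j => Set.mem_univ (u j))
  rw [Metric.tendsto_atTop] at hLim
  obtain ⟨K, hK⟩ := hLim (η/6) (by linarith)
  set i := (φ K + 1) * M with hi
  set j := (φ (K+1) + 1) * M with hj
  have hij : i < j := by
    have := hφ (show K < K + 1 by omega)
    have hM1 : 0 < M := Nat.succ_pos N
    exact (Nat.mul_lt_mul_right hM1).2 (by omega)
  have hclose : ∀ s : ↥t, dist ((f : X → X)^[i] s.1) ((f : X → X)^[j] s.1) < η/3 := by
    intro s
    have h1 := hK K le_rfl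
    have h2 := hK (K+1) (Nat.le_succ K)
    have d1 : dist (u (φ K)) L < η/6 := h1
    have d2 : dist (u (φ (K+1))) L < η/6 := h2
    have : dist (u (φ K)) (u (φ (K+1))) < η/3 := by
      calc dist (u (φ K)) (u (φ (K+1))) ≤ dist (u (φ K)) L + dist (u (φ (K+1))) L :=
            dist_triangle_right _ _ _
        _ < η/3 := by linarith
    have := dist_le_pi_dist (u (φ K)) (u (φ (K+1))) s
    calc dist ((f : X → X)^[i] s.1) ((f : X → X)^[j] s.1)
        = dist (u (φ K) s) (u (φ (K+1)) s) := rfl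
      _ ≤ dist (u (φ K)) (u (φ (K+1))) := dist_le_pi_dist _ _ s
      _ < η/3 := by linarith [dist_triangle_right (u (φ K)) (u (φ (K+1))) L]
  refine ⟨j - i, ?_, ?_⟩
  · have h1 : φ K < φ (K+1) := hφ (show K < K + 1 by omega)
    have hdiff : j - i = (φ (K+1) - φ K) * M := by
      rw [hi, hj, ← Nat.sub_mul]; congr 1; omega
    have h2 : 1 * M ≤ (φ (K+1) - φ K) * M := Nat.mul_le_mul_right M (by omega)
    omega
  · intro x
    obtain ⟨c, hc, hxc⟩ := Set.mem_iUnion₂.1 (htcov (Set.mem_univ x))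
    have hxc' : dist x c < η₂ := mem_ball.1 hxc
    -- f^[i] x close to f^[j] x
    have hix : dist ((f : X → X)^[i] x) ((f : X → X)^[i] c) < η/3 := by
      have := hη₂' x c hxc' (i : ℤ)
      rwa [iterZ_natCast] at this
    have hjx : dist ((f : X → X)^[j] x) ((f : X → X)^[j] c) < η/3 := by
      have := hη₂' x c hxc' (j : ℤ)
      rwa [iterZ_natCast] at this
    have hcc := hclose ⟨c, hc⟩
    have hij' : dist ((f : X → X)^[i] x) ((f : X → X)^[j] x) < η := by
      calc dist ((f : X → X)^[i] x) ((f : X → X)^[j] x)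
          ≤ dist ((f : X → X)^[i] x) ((f : X → X)^[i] c)
            + dist ((f : X → X)^[i] c) ((f : X → X)^[j] c)
            + dist ((f : X → X)^[j] c) ((f : X → X)^[j] x) := dist_triangle4 _ _ _ _
        _ < η/3 + η/3 + η/3 := by
            rw [dist_comm ((f : X → X)^[j] c)]
            exact add_lt_add (add_lt_add hix hcc) hjx
        _ = η := by ring
    -- apply f^[-i]
    have := hη' _ _ hij' (-(i : ℤ))
    rw [iterZ_neg_natCast] at this
    have hji : (f : X → X)^[j] x = (f : X → X)^[i] ((f : X → X)^[j-i] x) := by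
      rw [← Function.iterate_add_apply]
      congr 1; omega
    rw [hji, iterZ_neg_natCast] at this
    rw [dist_comm]
    exact this

theorem recurrent_of_regular' {X : Type*} [MetricSpace X] [CompactSpace X]
    (f : X ≃ₜ X)
    (hreg : ∀ ε > (0 : ℝ), ∃ η > (0 : ℝ), ∀ x y : X, dist x y < η →
      ∀ k : ℤ, dist (iterZ f k x) (iterZ f k y) < ε) :
    ∃ n : ℕ → ℕ, Filter.Tendsto n Filter.atTop Filter.atTop ∧
      ∀ ε > (0:ℝ), ∀ᶠ k in Filter.atTop, ∀ x, dist ((f : X → X)^[n k] x) x < ε := by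
  choose n hn1 hn2 using fun k : ℕ =>
    key f hreg (1/(k+1)) (by positivity) k
  refine ⟨n, ?_, ?_⟩
  · exact tendsto_atTop_mono (fun k => by have := hn1 k; simp only [id]; omega) tendsto_id
  · intro ε hε
    obtain ⟨K, hK⟩ := exists_nat_one_div_lt hε
    filter_upwards [eventually_ge_atTop K] with k hk x
    have h1 : (1:ℝ)/(k+1) ≤ 1/(K+1) := by
      apply one_div_le_one_div_of_le (by positivity)
      linarith [(Nat.cast_le.2 hk : (K:ℝ) ≤ k)]
    calc dist ((f : X → X)^[n k] x) x < 1/(k+1) := hn2 k x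
      _ ≤ 1/(K+1) := h1
      _ < ε := hK

/-- Every regular homeomorphism (all integer iterates form an equicontinuous family)
of a compact metric space is recurrent. -/
theorem recurrent_of_regular {X : Type*} [MetricSpace X] [CompactSpace X]
    (f : X ≃ₜ X)
    (hreg : ∀ ε > (0 : ℝ), ∃ η > (0 : ℝ), ∀ x y : X, dist x y < η →
      ∀ k : ℤ, dist (iterZ f k x) (iterZ f k y) < ε) :
    IsRecurrent (f : X → X) := by
  exact recurrent_of_regular' f hreg
end

section
/- Let f be a recurrent homeomorphism of a compact metric space X and K a compact subset with K ⊆ f(K). Then f(K) = K. -/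
open Filter Topology Metric

/-- If  is a recurrent homeomorphism of a compact metric space and  is a
nonempty compact subset with , then . -/
theorem image_eq_of_subset_image {X : Type*} [MetricSpace X] [CompactSpace X]
    (f : X ≃ₜ X) (hf : IsRecurrent (f : X → X))
    (K : Set X) (hK : IsCompact K) (hKne : K.Nonempty) (hsub : K ⊆ (f : X → X) '' K) :
    (f : X → X) '' K = K := by
  obtain ⟨n, hn, hrec⟩ := hf
  apply Set.Subset.antisymm _ hsub
  rintro y ⟨x, hx, rfl⟩
  have hsymm : ∀ m, (f.symm : X → X)^[m] '' K ⊆ K := by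
    intro m
    induction m with
    | zero => simp
    | succ m ih =>
      rw [Function.iterate_succ, Set.image_comp]
      refine (Set.image_mono ?_).trans ih
      rintro z ⟨w, hw, rfl⟩
      obtain ⟨u, hu, hue⟩ := hsub hw
      rw [← hue]; simpa using hu
  rw [← hK.isClosed.closure_eq, Metric.mem_closure_iff]
  intro ε hε
  obtain ⟨k, hk1, hk2⟩ := ((hrec ε hε).and (hn.eventually_ge_atTop 1)).exists
  obtain ⟨m', hm'⟩ : ∃ m', n k = m' + 1 := ⟨n k - 1, by omega⟩
  refine ⟨(f.symm : X → X)^[n k] (f x), ?_, ?_⟩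
  · have : (f.symm : X → X)^[n k] (f x) = (f.symm : X → X)^[m'] x := by
      rw [hm', Function.iterate_succ_apply, f.symm_apply_apply]
    rw [this]
    exact hsymm m' ⟨x, hx, rfl⟩
  · have := hk1 ((f.symm : X → X)^[n k] (f x))
    rwa [Function.LeftInverse.iterate f.apply_symm_apply (n k) (f x)] at this
end

section
/- Let X be a connected topological space and A, B open subsets of X such that X, A, B, ∂A, and ∂B are all nonempty and connected, and ∂A ∩ ∂B = ∅. Then exactly one of the following holds: (1) X = A ∪ B; (2) closure(A) ∩ closure(B) = ∅; (3) closure(A) ⊆ B; (4) closure(B) ⊆ A. -/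
open Topology

/-- Dichotomy: a preconnected set disjoint from the frontier of an open set `B`
is contained in `B` or in the exterior of `B`. -/
lemma dich' {X : Type*} [TopologicalSpace X] {S B : Set X} (hS : IsPreconnected S)
    (hBo : IsOpen B) (h : S ∩ frontier B = ∅) : S ⊆ B ∨ S ⊆ (closure B)ᶜ := by
  apply hS.subset_or_subset hBo isClosed_closure.isOpen_compl
  · exact Set.disjoint_compl_right_iff_subset.mpr subset_closure
  · intro x hx
    by_cases hc : x ∈ closure B
    · left
      by_contra hxB
      exact Set.eq_empty_iff_forall_notMem.mp h x
        ⟨hx, hc, by rwa [hBo.interior_eq]⟩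
    · exact Or.inr hc

/-- The four-fold alternative for two open connected subsets with connected
boundaries which are disjoint, in a connected space. -/
theorem four_alternative {X : Type*} [TopologicalSpace X] [ConnectedSpace X]
    (A B : Set X) (hAo : IsOpen A) (hBo : IsOpen B)
    (hA : IsConnected A) (hB : IsConnected B)
    (hfA : IsConnected (frontier A)) (hfB : IsConnected (frontier B))
    (hdisj : frontier A ∩ frontier B = ∅) :
    (A ∪ B = Set.univ ∧ ¬(closure A ∩ closure B = ∅) ∧ ¬(closure A ⊆ B) ∧ ¬(closure B ⊆ A)) ∨
    (¬(A ∪ B = Set.univ) ∧ (closure A ∩ closure B = ∅) ∧ ¬(closure A ⊆ B) ∧ ¬(closure B ⊆ A)) ∨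
    (¬(A ∪ B = Set.univ) ∧ ¬(closure A ∩ closure B = ∅) ∧ (closure A ⊆ B) ∧ ¬(closure B ⊆ A)) ∨
    (¬(A ∪ B = Set.univ) ∧ ¬(closure A ∩ closure B = ∅) ∧ ¬(closure A ⊆ B) ∧ (closure B ⊆ A)) := by
  obtain ⟨⟨a, ha⟩, hfAc⟩ := hfA
  obtain ⟨⟨b, hb⟩, hfBc⟩ := hfB
  -- basic facts
  have hclA : closure A = A ∪ frontier A := closure_eq_self_union_frontier A
  have hclB : closure B = B ∪ frontier B := closure_eq_self_union_frontier B
  have hAne : A ≠ Set.univ := by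
    intro h; rw [h] at ha; simp [frontier_univ] at ha
  have hBne : B ≠ Set.univ := by
    intro h; rw [h] at hb; simp [frontier_univ] at hb
  -- dichotomies
  have h1 : frontier A ⊆ B ∨ frontier A ⊆ (closure B)ᶜ := dich' hfAc hBo hdisj
  have h2 : frontier B ⊆ A ∨ frontier B ⊆ (closure A)ᶜ := by
    apply dich' hfBc hAo
    rw [Set.inter_comm]; exact hdisj
  -- case (3) helper: ∂A ⊆ B and ∂B ∩ closure A = ∅ implies closure A ⊆ B
  have case3 : ∀ A' B' : Set X, IsOpen A' → IsOpen B' → IsConnected A' →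
      (frontier A').Nonempty → frontier A' ⊆ B' → frontier B' ⊆ (closure A')ᶜ →
      closure A' ⊆ B' := by
    intro A' B' hA'o hB'o hA' ⟨a', ha'⟩ hfa hfb
    have hAB : A' ⊆ B' ∨ A' ⊆ (closure B')ᶜ := by
      apply dich' hA'.isPreconnected hB'o
      rw [Set.eq_empty_iff_forall_notMem]
      rintro x ⟨hx1, hx2⟩
      exact hfb hx2 (subset_closure hx1)
    rcases hAB with hAB | hAB
    · rw [closure_eq_self_union_frontier]
      exact Set.union_subset hAB hfa
    · exfalso
      have h3 : closure A' ⊆ B'ᶜ := by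
        have : closure A' ⊆ closure (closure B')ᶜ :=
          closure_mono hAB |>.trans (le_of_eq rfl)
        refine this.trans ?_
        rw [← hB'o.isClosed_compl.closure_eq]
        exact closure_mono (Set.compl_subset_compl.mpr subset_closure)
      exact h3 (frontier_subset_closure ha') (hfa ha')
  rcases h1 with h1 | h1 <;> rcases h2 with h2 | h2
  · -- ∂A ⊆ B, ∂B ⊆ A : case (1)
    left
    have huniv : A ∪ B = Set.univ := by
      have hcl : IsClosed (A ∪ B) := by
        have : closure (A ∪ B) ⊆ A ∪ B := by
          rw [closure_union, hclA, hclB]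
          intro x hx
          rcases hx with (hx | hx) | (hx | hx)
          exacts [Or.inl hx, Or.inr (h1 hx), Or.inr hx, Or.inl (h2 hx)]
        exact closure_subset_iff_isClosed.mp this
      have := isClopen_iff.mp ⟨hcl, hAo.union hBo⟩
      rcases this with h | h
      · exfalso
        have haAB : a ∈ A ∪ B := Or.inr (h1 ha)
        rw [h] at haAB
        exact haAB
      · exact h
    refine ⟨huniv, ?_, ?_, ?_⟩
    · rw [Set.eq_empty_iff_forall_notMem]
      push_neg
      exact ⟨a, frontier_subset_closure ha, subset_closure (h1 ha)⟩
    · intro hc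
      apply hBne
      rw [← huniv, Set.union_eq_right.mpr (subset_closure.trans hc)]
    · intro hc
      apply hAne
      rw [← huniv, Set.union_eq_left.mpr (subset_closure.trans hc)]
  · -- ∂A ⊆ B, ∂B ⊆ ext A : case (3)
    right; right; left
    have h3 : closure A ⊆ B := case3 A B hAo hBo hA ⟨a, ha⟩ h1 h2
    refine ⟨?_, ?_, h3, ?_⟩
    · intro hc
      apply hBne
      rw [← hc, Set.union_eq_right.mpr (subset_closure.trans h3)]
    · rw [Set.eq_empty_iff_forall_notMem]
      push_neg
      exact ⟨a, frontier_subset_closure ha, subset_closure (h3 (frontier_subset_closure ha))⟩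
    · intro hc
      exact h2 hb (subset_closure (hc (frontier_subset_closure hb)))
  · -- ∂A ⊆ ext B, ∂B ⊆ A : case (4)
    right; right; right
    have h4 : closure B ⊆ A := case3 B A hBo hAo hB ⟨b, hb⟩ h2 h1
    refine ⟨?_, ?_, ?_, h4⟩
    · intro hc
      apply hAne
      rw [← hc, Set.union_eq_left.mpr (subset_closure.trans h4)]
    · rw [Set.eq_empty_iff_forall_notMem]
      push_neg
      exact ⟨b, subset_closure (h4 (frontier_subset_closure hb)), frontier_subset_closure hb⟩
    · intro hc
      exact h1 ha (subset_closure (hc (frontier_subset_closure ha)))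
  · -- ∂A ⊆ ext B, ∂B ⊆ ext A : case (2)
    right; left
    have h2' : closure A ∩ closure B = ∅ := by
      by_contra hne
      obtain ⟨x, hx1, hx2⟩ := Set.nonempty_iff_ne_empty.mpr hne
      have hxA : x ∈ A := by
        rcases hclA ▸ hx1 with h | h
        · exact h
        · exact absurd hx2 (h1 h)
      have hxB : x ∈ B := by
        rcases hclB ▸ hx2 with h | h
        · exact h
        · exact absurd hx1 (h2 h)
      -- A ⊆ B or A ⊆ ext B
      have hAB : A ⊆ B ∨ A ⊆ (closure B)ᶜ := by
        apply dich' hA.isPreconnected hBo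
        rw [Set.eq_empty_iff_forall_notMem]
        rintro y ⟨hy1, hy2⟩
        exact h2 hy2 (subset_closure hy1)
      rcases hAB with hAB | hAB
      · exact h1 ha (closure_mono hAB (frontier_subset_closure ha))
      · exact hAB hxA (subset_closure hxB)
    refine ⟨?_, h2', ?_, ?_⟩
    · intro hc
      have hdAB : A ∩ B = ∅ := by
        rw [Set.eq_empty_iff_forall_notMem]
        rintro y ⟨hy1, hy2⟩
        exact Set.eq_empty_iff_forall_notMem.mp h2' y
          ⟨subset_closure hy1, subset_closure hy2⟩
      have : IsClopen A := by
        refine ⟨?_, hAo⟩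
        have hcompl : Aᶜ = B := by
          apply Set.eq_of_subset_of_subset
          · intro y hy
            rcases (hc ▸ Set.mem_univ y : y ∈ A ∪ B) with h | h
            · exact absurd h hy
            · exact h
          · intro y hy hyA
            exact Set.eq_empty_iff_forall_notMem.mp hdAB y ⟨hyA, hy⟩
        rw [← isOpen_compl_iff, hcompl]; exact hBo
      rcases isClopen_iff.mp this with h | h
      · exact hA.nonempty.ne_empty h
      · exact hAne h
    · intro hc
      exact Set.eq_empty_iff_forall_notMem.mp h2' a
        ⟨frontier_subset_closure ha, subset_closure (hc (frontier_subset_closure ha))⟩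
    · intro hc
      exact Set.eq_empty_iff_forall_notMem.mp h2' b
        ⟨subset_closure (hc (frontier_subset_closure hb)), frontier_subset_closure hb⟩
end

section
/- Let f be a recurrent homeomorphism of the closed annulus A = S¹ × [0,1] that preserves each boundary component and preserves orientation. If a lift F of f to the universal cover ℝ × [0,1] has a fixed point, then F is recurrent, and consequently F is the identity on each boundary line ℝ × {0} and ℝ × {1}. -/
open Filter Topology Metric

/-- The closed annulus. -/
abbrev Annulus2 := AddCircle (1 : ℝ) × (Set.Icc (0 : ℝ) 1)

/-- The universal cover of the annulus. -/
abbrev AnnulusCover := ℝ × (Set.Icc (0 : ℝ) 1)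

/-- The covering projection of the annulus. -/
noncomputable def annulusProj (p : AnnulusCover) : Annulus2 := ((p.1 : AddCircle (1 : ℝ)), p.2)

/-!
Let `G` be a lift of a map `g` of the annulus that moves every point by less than `1/2`. The
horizontal displacement `(G p).1 - p.1` is then everywhere within `1/2` of an integer, so by
connectedness its nearest integer is constant; it is `0` at a fixed point of `G`, hence `G` is as
close to the identity as `g`. Applied to the iterates `f^[n k]`, this makes `F` recurrent.

Since `f` is homotopic to the identity, lifting the homotopy shows that `F` commutes with the deck
translation. On a boundary line `F` is therefore an increasing map `g` of `ℝ`, and a monotone map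
of `ℝ` whose iterates return arbitrarily close to a point `x` must fix `x`.
-/

open Function

local notation "π" => Prod.map ((↑) : ℝ → UnitAddCircle) id

theorem round_eq_of_abs_sub_lt {x : ℝ} {n : ℤ} (h : |x - n| < 1 / 2) : round x = n := by
  rw [round_eq_iff, Set.mem_Ico]
  constructor <;> linarith [abs_lt.mp h]

theorem UnitAddCircle.dist_coe_coe (x y : ℝ) :
    dist (x : UnitAddCircle) y = |x - y - round (x - y)| := by
  rw [dist_eq_norm, ← AddCircle.coe_sub, UnitAddCircle.norm_eq]

section Preconnected

variable {X : Type*} [TopologicalSpace X] [PreconnectedSpace X]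

theorem round_comp_eq_of_abs_sub_round_lt {g : X → ℝ} (hg : Continuous g)
    (h : ∀ x, |g x - round (g x)| < 1 / 2) (x y : X) : round (g x) = round (g y) := by
  refine IsLocallyConstant.apply_eq_of_preconnectedSpace (f := fun x => round (g x)) ?_ x y
  rw [IsLocallyConstant.iff_eventually_eq]
  intro z
  have hr : 0 < 1 / 2 - |g z - round (g z)| := sub_pos.2 (h z)
  filter_upwards [Metric.tendsto_nhds.mp (hg.tendsto z) _ hr] with z' hz'
  refine round_eq_of_abs_sub_lt ?_
  calc |g z' - round (g z)| ≤ |g z' - g z| + |g z - round (g z)| := abs_sub_le _ _ _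
    _ < 1 / 2 := by rw [← Real.dist_eq]; linarith

theorem sub_eq_sub_of_coe_eq {g₁ g₂ : X → ℝ} (h₁ : Continuous g₁) (h₂ : Continuous g₂)
    (h : ∀ x, (g₁ x : UnitAddCircle) = g₂ x) (x y : X) : g₁ x - g₂ x = g₁ y - g₂ y := by
  have hint : ∀ x, g₁ x - g₂ x = round (g₁ x - g₂ x) := by
    intro x
    obtain ⟨n, hn⟩ := (AddCircle.coe_eq_zero_iff 1).mp
      (show ((g₁ x - g₂ x : ℝ) : UnitAddCircle) = 0 by rw [AddCircle.coe_sub, h x, sub_self])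
    rw [← hn, zsmul_one, round_intCast]
  rw [hint x, hint y, round_comp_eq_of_abs_sub_round_lt (g := fun x => g₁ x - g₂ x) (h₁.sub h₂)
    (fun x => by rw [← hint x, sub_self, abs_zero]; norm_num) x y]

end Preconnected

theorem lift_add_one_of_homotopic_id {h : C(UnitAddCircle, UnitAddCircle)}
    (hh : h.Homotopic (ContinuousMap.id _)) {φ : ℝ → ℝ} (hφ : Continuous φ)
    (hlift : ∀ x, (φ x : UnitAddCircle) = h x) (x : ℝ) : φ (x + 1) = φ x + 1 := by
  obtain ⟨H⟩ := hh
  let H' : C(unitInterval × ℝ, UnitAddCircle) :=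
    H.toContinuousMap.comp ((ContinuousMap.id _).prodMap ⟨(↑), continuous_quotient_mk'⟩)
  have hH'0 : ∀ x, H' (0, x) = φ x := fun x => by simp [H', hlift]
  let Φ := (AddCircle.isCoveringMap_coe (1 : ℝ)).liftHomotopy H' ⟨φ, hφ⟩ hH'0
  have hΦ : ∀ q, (Φ q : UnitAddCircle) = H (q.1, q.2) :=
    congr_fun ((AddCircle.isCoveringMap_coe (1 : ℝ)).liftHomotopy_lifts ..)
  have hΦ0 : ∀ x, Φ (0, x) = φ x :=
    (AddCircle.isCoveringMap_coe (1 : ℝ)).liftHomotopy_zero H' ⟨φ, hφ⟩ hH'0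
  -- The increment of `Φ t` over one turn is an integer, hence independent of `t`; at `t = 0` it is
  -- the increment of `φ`, at `t = 1` that of a lift of the identity, namely `1`.
  have hturn := sub_eq_sub_of_coe_eq (g₁ := fun q : unitInterval × ℝ => Φ (q.1, q.2 + 1))
    (g₂ := Φ) (by fun_prop) Φ.continuous (fun q => by simp only [hΦ, AddCircle.coe_add_period])
    (0, x) (1, 0)
  have hid := sub_eq_sub_of_coe_eq (g₁ := fun y => Φ (1, y)) (g₂ := id) (by fun_prop)
    continuous_id (fun y => by simp only [hΦ, id, ContinuousMap.Homotopy.apply_one]; rfl) 0 1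
  simp only [hΦ0, id, zero_add] at hturn hid
  linarith

theorem IsRecurrent.exists_iterate_dist_lt {X : Type*} [MetricSpace X] {f : X → X}
    (hf : IsRecurrent f) (x : X) {ε : ℝ} (hε : 0 < ε) : ∃ N ≥ 1, dist (f^[N] x) x < ε := by
  obtain ⟨n, hn, hclose⟩ := hf
  obtain ⟨k, hk, hk1⟩ := ((hclose ε hε).and (hn.eventually_ge_atTop 1)).exists
  exact ⟨n k, hk1, hk x⟩

theorem Monotone.apply_eq_self_of_iterate_near {g : ℝ → ℝ} (hg : Monotone g) {x : ℝ}
    (hnear : ∀ ε > 0, ∃ N ≥ 1, |g^[N] x - x| < ε) : g x = x := by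
  rcases lt_trichotomy (g x) x with hlt | heq | hgt
  · obtain ⟨N, hN, hd⟩ := hnear (x - g x) (by linarith)
    have : g^[N] x ≤ g x := by simpa using hg.antitone_iterate_of_map_le hlt.le hN
    linarith [neg_abs_le (g^[N] x - x)]
  · exact heq
  · obtain ⟨N, hN, hd⟩ := hnear (g x - x) (by linarith)
    have : g x ≤ g^[N] x := by simpa using hg.monotone_iterate_of_le_map hgt.le hN
    linarith [le_abs_self (g^[N] x - x)]

theorem strictMono_of_injective_of_map_add_one {g : ℝ → ℝ} (hc : Continuous g)
    (hinj : Injective g) (h1 : ∀ x, g (x + 1) = g x + 1) : StrictMono g :=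
  (hc.strictMono_of_inj hinj).resolve_right fun hanti => by
    have := hanti (lt_add_one 0)
    rw [h1] at this
    linarith

section Lift

variable {Y : Type*}

theorem fst_apply_add_one_of_homotopic_id [TopologicalSpace Y]
    {f : C(UnitAddCircle × Y, UnitAddCircle × Y)} (hf : f.Homotopic (ContinuousMap.id _))
    {F : ℝ × Y → ℝ × Y} (hF : Continuous F) (hsemi : Semiconj π F f) (q : ℝ × Y) :
    (F (q.1 + 1, q.2)).1 = (F q).1 + 1 := by
  let slice : C(UnitAddCircle, UnitAddCircle × Y) := (ContinuousMap.id _).prodMk (.const _ q.2)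
  have hslice := ((ContinuousMap.Homotopic.refl ContinuousMap.fst).comp hf).comp
    (ContinuousMap.Homotopic.refl slice)
  rw [show (ContinuousMap.fst.comp (.id _)).comp slice = .id UnitAddCircle from rfl] at hslice
  exact lift_add_one_of_homotopic_id hslice (φ := fun x => (F (x, q.2)).1) (by fun_prop)
    (fun x => congr_arg Prod.fst (hsemi (x, q.2))) q.1

variable [MetricSpace Y]

theorem dist_apply_lt_of_semiconj [PreconnectedSpace Y] {G : ℝ × Y → ℝ × Y}
    {g : UnitAddCircle × Y → UnitAddCircle × Y} (hG : Continuous G) (hsemi : Semiconj π G g)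
    {p₀ : ℝ × Y} (hp₀ : G p₀ = p₀) {ε : ℝ} (hε : ε ≤ 1 / 2) (hg : ∀ z, dist (g z) z < ε)
    (p : ℝ × Y) : dist (G p) p < ε := by
  have hclose : ∀ q, |(G q).1 - q.1 - round ((G q).1 - q.1)| < ε ∧ dist (G q).2 q.2 < ε := by
    intro q
    have := hg (π q)
    rwa [← hsemi q, Prod.dist_eq, max_lt_iff, Prod.map_fst, Prod.map_fst,
      UnitAddCircle.dist_coe_coe] at this
  have hround : round ((G p).1 - p.1) = 0 := by
    rw [round_comp_eq_of_abs_sub_round_lt (g := fun q => (G q).1 - q.1) (by fun_prop)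
      (fun q => (hclose q).1.trans_le hε) p p₀, hp₀, sub_self, round_zero]
  have hfst := (hclose p).1
  rw [hround, Int.cast_zero, sub_zero] at hfst
  rw [Prod.dist_eq, max_lt_iff, Real.dist_eq]
  exact ⟨hfst, (hclose p).2⟩

theorem isRecurrent_of_semiconj [PreconnectedSpace Y] {F : ℝ × Y → ℝ × Y}
    {f : UnitAddCircle × Y → UnitAddCircle × Y} (hF : Continuous F) (hsemi : Semiconj π F f)
    (hfix : ∃ p, F p = p) (hrec : IsRecurrent f) : IsRecurrent F := by
  obtain ⟨n, hn, hclose⟩ := hrec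
  obtain ⟨p₀, hp₀⟩ := hfix
  refine ⟨n, hn, fun ε hε => ?_⟩
  filter_upwards [hclose (min ε (1 / 2)) (by positivity)] with k hk p
  exact (dist_apply_lt_of_semiconj (hF.iterate _) (hsemi.iterate_right _) (iterate_fixed hp₀ _)
    (min_le_right _ _) hk p).trans_le (min_le_left _ _)

theorem apply_eq_self_of_mapsTo_line {F : ℝ × Y → ℝ × Y} (hF : Continuous F)
    (hinj : Injective F) (hrec : IsRecurrent F)
    (htrans : ∀ q, (F (q.1 + 1, q.2)).1 = (F q).1 + 1) {y : Y} (hy : ∀ x, (F (x, y)).2 = y)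
    (x : ℝ) : F (x, y) = (x, y) := by
  set g : ℝ → ℝ := fun x => (F (x, y)).1
  have hsemi : Semiconj (·, y) g F := fun x => Prod.ext rfl (hy x).symm
  have hginj : Injective g := fun a b hab => by
    have : F (a, y) = F (b, y) := by rw [← hsemi a, ← hsemi b, hab]
    exact congr_arg Prod.fst (hinj this)
  have hmono : StrictMono g :=
    strictMono_of_injective_of_map_add_one (by fun_prop) hginj fun x => htrans (x, y)
  have hfix : g x = x := hmono.monotone.apply_eq_self_of_iterate_near fun ε hε => by
    obtain ⟨N, hN, hd⟩ := hrec.exists_iterate_dist_lt (x, y) hε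
    rw [← hsemi.iterate_right N x, Prod.dist_eq, Real.dist_eq] at hd
    exact ⟨N, hN, (le_max_left _ _).trans_lt hd⟩
  rw [← hsemi x, hfix]

end Lift

/-- If a recurrent homeomorphism of the closed annulus preserves each boundary
component and preserves orientation (equivalently, under the previous condition,
is homotopic to the identity), then any lift to the universal cover having a
fixed point is recurrent, and is the identity on each boundary line. -/
theorem annulus_lift_recurrent (f : Annulus2 ≃ₜ Annulus2)
    (hrec : IsRecurrent (f : Annulus2 → Annulus2))
    (hbd : ∀ p : Annulus2, (((p.2 : ℝ) = 0 → (((f p).2 : ℝ) = 0)) ∧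
      ((p.2 : ℝ) = 1 → (((f p).2 : ℝ) = 1))))
    (hor : ContinuousMap.Homotopic ⟨f, f.continuous⟩ (ContinuousMap.id Annulus2))
    (F : AnnulusCover ≃ₜ AnnulusCover)
    (hlift : ∀ p, annulusProj (F p) = f (annulusProj p))
    (hfix : ∃ p, F p = p) :
    IsRecurrent (F : AnnulusCover → AnnulusCover) ∧
      ∀ p : AnnulusCover, ((p.2 : ℝ) = 0 ∨ (p.2 : ℝ) = 1) → F p = p := by
  have hsemi : Semiconj π F f := hlift
  have hFrec : IsRecurrent (F : AnnulusCover → AnnulusCover) :=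
    isRecurrent_of_semiconj F.continuous hsemi hfix hrec
  refine ⟨hFrec, fun p hp => ?_⟩
  have hline : ∀ x, (F (x, p.2)).2 = p.2 := fun x => Subtype.ext <| by
    rw [show (F (x, p.2)).2 = (f (annulusProj (x, p.2))).2 from congr_arg Prod.snd (hlift _)]
    rcases hp with h | h
    · rw [(hbd _).1 h, h]
    · rw [(hbd _).2 h, h]
  simpa using apply_eq_self_of_mapsTo_line F.continuous F.injective hFrec
    (fst_apply_add_one_of_homotopic_id hor F.continuous hsemi) hline p.1
end

section
/- Let f be a homeomorphism of a compact metric space X such that the orbit {f^n(x₀) : n ∈ ℤ} of some regular point x₀ is dense in X. Then f is recurrent. -/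
open Filter Topology Metric

/-! Since the orbit of `x₀` is dense, regularity says that the integer iterates of `f` form a
uniformly equicontinuous family on all of `X`. By compactness, `f^m x₀` and `f^(m+p) x₀` are
close for some `m` and arbitrarily large `p`; pulling back by `f^(-m)` shows that `f^p x₀` is
close to `x₀`. Equicontinuity moves this to every point `f^k x₀` of the orbit at once, and
density and continuity extend it to a uniform bound on `X`. -/

namespace Homeomorph

theorem coe_pow {X : Type*} [TopologicalSpace X] (f : X ≃ₜ X) (n : ℕ) :
    ⇑(f ^ n) = (⇑f)^[n] := by
  induction n with
  | zero => rfl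
  | succ n ih => rw [pow_succ, Function.iterate_succ, ← ih]; rfl

end Homeomorph

theorem iterZ_eq_coe_zpow {X : Type*} [TopologicalSpace X] (f : X ≃ₜ X) (k : ℤ) :
    iterZ f k = ⇑(f ^ k) := by
  cases k with
  | ofNat n =>
    rw [Int.ofNat_eq_natCast, zpow_natCast, Homeomorph.coe_pow]
    exact if_pos (Int.natCast_nonneg n)
  | negSucc n =>
    rw [zpow_negSucc, ← inv_pow, Homeomorph.coe_pow]
    exact if_neg (Int.negSucc_lt_zero n).not_ge

theorem exists_add_le_dist_lt {X : Type*} [PseudoMetricSpace X] [CompactSpace X] (u : ℕ → X)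
    {η : ℝ} (hη : 0 < η) (N : ℕ) : ∃ m n, m + N ≤ n ∧ dist (u m) (u n) < η := by
  obtain ⟨_, -, φ, hφ, hlim⟩ := isCompact_univ.tendsto_subseq fun i => Set.mem_univ (u i)
  obtain ⟨K, hK⟩ := Metric.cauchySeq_iff.mp hlim.cauchySeq η hη
  exact ⟨φ K, φ (N + K), (add_comm _ _).trans_le (hφ.add_le_nat N K),
    hK K le_rfl (N + K) (Nat.le_add_left K N)⟩

theorem isRecurrent_of_frequently {X : Type*} [MetricSpace X] {f : X → X}
    (h : ∀ ε > 0, ∃ᶠ n in atTop, ∀ x, dist (f^[n] x) x < ε) : IsRecurrent f := by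
  obtain ⟨φ, hφ, hφ_close⟩ := extraction_forall_of_frequently fun k : ℕ =>
    h (1 / (k + 1)) Nat.one_div_pos_of_nat
  refine ⟨φ, hφ.tendsto_atTop, fun ε hε => ?_⟩
  obtain ⟨K, hK⟩ := exists_nat_one_div_lt hε
  filter_upwards [eventually_ge_atTop K] with k hk x
  calc dist (f^[φ k] x) x < 1 / (k + 1) := hφ_close k x
    _ ≤ 1 / (K + 1) := by gcongr
    _ < ε := hK

section EquicontinuousIterates

variable {X : Type*} [PseudoMetricSpace X] {f : X ≃ₜ X}

theorem exists_le_dist_pow_apply_lt [CompactSpace X]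
    (hf : UniformEquicontinuous fun k : ℤ => ⇑(f ^ k)) (x : X) {ε : ℝ} (hε : 0 < ε) (N : ℕ) :
    ∃ n ≥ N, dist ((f ^ n) x) x < ε := by
  obtain ⟨η, hη, hfη⟩ := Metric.uniformEquicontinuous_iff.mp hf ε hε
  obtain ⟨m, n, hmn, hdist⟩ := exists_add_le_dist_lt (fun n => (f ^ n) x) hη N
  obtain ⟨p, rfl⟩ := Nat.exists_eq_add_of_le (le_of_add_le_left hmn)
  refine ⟨p, by omega, ?_⟩
  simpa [pow_add, dist_comm] using hfη _ _ hdist (-m)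

theorem dist_pow_apply_le_of_denseRange {x₀ : X}
    (hx₀ : DenseRange fun k : ℤ => (f ^ k) x₀) {n : ℕ} {ε : ℝ}
    (hn : ∀ k : ℤ, dist ((f ^ k) ((f ^ n) x₀)) ((f ^ k) x₀) < ε) (x : X) :
    dist ((f ^ n) x) x ≤ ε := by
  refine hx₀.induction_on x (isClosed_le (by fun_prop) continuous_const) fun k => ?_
  rw [← Homeomorph.mul_apply, ← zpow_natCast, ← zpow_add, add_comm, zpow_add,
    Homeomorph.mul_apply]
  exact (hn k).le

end EquicontinuousIterates

theorem isRecurrent_of_uniformEquicontinuous_of_denseRange {X : Type*} [MetricSpace X]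
    [CompactSpace X] {f : X ≃ₜ X} (hf : UniformEquicontinuous fun k : ℤ => ⇑(f ^ k)) {x₀ : X}
    (hx₀ : DenseRange fun k : ℤ => (f ^ k) x₀) : IsRecurrent ⇑f := by
  refine isRecurrent_of_frequently fun ε hε => frequently_atTop.mpr fun N => ?_
  obtain ⟨η, hη, hfη⟩ := Metric.uniformEquicontinuous_iff.mp hf (ε / 2) (half_pos hε)
  obtain ⟨n, hnN, hn⟩ := exists_le_dist_pow_apply_lt hf x₀ hη N
  refine ⟨n, hnN, fun x => ?_⟩
  rw [← Homeomorph.coe_pow]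
  exact (dist_pow_apply_le_of_denseRange hx₀ (hfη _ _ hn) x).trans_lt (half_lt_self hε)

/-- If a homeomorphism of a compact metric space has a regular point (the family
of all iterates is equicontinuous on the orbit closure of the point) whose orbit
is dense, then the homeomorphism is recurrent. -/
theorem recurrent_of_regular_dense_orbit {X : Type*} [MetricSpace X] [CompactSpace X]
    (f : X ≃ₜ X) (x₀ : X)
    (hreg : ∀ ε > (0 : ℝ), ∃ η > (0 : ℝ),
      ∀ x ∈ closure {y : X | ∃ k : ℤ, iterZ f k x₀ = y},
      ∀ y ∈ closure {y : X | ∃ k : ℤ, iterZ f k x₀ = y},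
        dist x y < η → ∀ k : ℤ, dist (iterZ f k x) (iterZ f k y) < ε)
    (hdense : Dense {y : X | ∃ k : ℤ, iterZ f k x₀ = y}) :
    IsRecurrent (f : X → X) := by
  simp only [iterZ_eq_coe_zpow] at hreg hdense
  simp only [hdense.closure_eq, Set.mem_univ, forall_const] at hreg
  exact isRecurrent_of_uniformEquicontinuous_of_denseRange
    (Metric.uniformEquicontinuous_iff.mpr hreg) hdense
end
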